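/- arXiv:1210.2883 — 2 statements merged into one kernel-verified Lean document; each statement's English description precedes it below -/
import Mathlib

section
/- Fix λ > 0 and let x be a BA fixed point. Then x'(0) > 0, for every t ≥ 0 the point (x(t), x'(t)) lies in the set Δ = {(x₁, x₂) ∈ [0,∞)² : λ(1 − e^{−x₁}) < x₂ < λ} (i.e. φ_λ(x(t)) < x'(t) < λ), the function x' is increasing, and x'(t) → λ as t → ∞. -/
/-!
Write `x'(t) = e^t ∫_t^∞ φ_λ(x(s)) e^{-s} ds`. Since `0 ≤ φ_λ < λ`, this gives
`0 ≤ x' < λ`; as `x ≢ 0` is then increasing, `φ_λ(x(s))` is eventually positive, so `x' > 0`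
and `x` is strictly increasing. Comparing `φ_λ(x(s))` with `φ_λ(x(t))` for `s > t` yields
`φ_λ(x(t)) < x'(t)`, and differentiating gives `x'' = x' - φ_λ(x) > 0`. Hence
`x(t) ≥ x'(0) t → ∞`, so `φ_λ(x(t)) → λ`, which squeezes `x'(t)` to `λ`.
-/

open MeasureTheory

/-- φ_λ(y) = λ(1 − e^{−y}). -/
noncomputable def baPhi (lam y : ℝ) : ℝ := lam * (1 - Real.exp (-y))

/-- A BA fixed point: x : [0,∞) → [0,∞) with x(0) = 0, subexponential decay
`e^{-as} x(s) → 0` for every a > 0, x not identically 0, and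
x(t) = ∫₀ᵗ e^u (∫_u^∞ φ_λ(x(s)) e^{−s} ds) du for all t ≥ 0. -/
def IsBAFixedPoint (lam : ℝ) (x : ℝ → ℝ) : Prop :=
  (∀ t, 0 ≤ t → 0 ≤ x t) ∧
  x 0 = 0 ∧
  (∀ a : ℝ, 0 < a →
    Filter.Tendsto (fun s => Real.exp (-(a * s)) * x s) Filter.atTop (nhds 0)) ∧
  (∃ t, 0 ≤ t ∧ x t ≠ 0) ∧
  (∀ t, 0 ≤ t →
    x t = ∫ u in (0:ℝ)..t, Real.exp u * ∫ s in Set.Ioi u, baPhi lam (x s) * Real.exp (-s))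

open Set Filter Topology Real

theorem aestronglyMeasurable_restrict_Ioi_of_forall_gt {β : Type*} [TopologicalSpace β]
    [TopologicalSpace.PseudoMetrizableSpace β] {μ : Measure ℝ} {f : ℝ → β} {a : ℝ}
    (hf : ∀ b, a < b → AEStronglyMeasurable f (μ.restrict (Ioi b))) :
    AEStronglyMeasurable f (μ.restrict (Ioi a)) := by
  have ha : Tendsto (fun n : ℕ => a + 1 / ((n : ℝ) + 1)) atTop (𝓝 a) := by
    simpa using tendsto_one_div_add_atTop_nhds_zero_nat.const_add a
  refine (aecover_Ioi_of_Ioi ha).aestronglyMeasurable fun n => ?_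
  have hlt : a < a + 1 / ((n : ℝ) + 1) := lt_add_of_pos_right a (by positivity)
  rw [Measure.restrict_restrict measurableSet_Ioi, inter_eq_left.2 (Ioi_subset_Ioi hlt.le)]
  exact hf _ hlt

theorem setIntegral_Ioi_pos {f : ℝ → ℝ} {a b : ℝ} (hf : IntegrableOn f (Ioi a))
    (hf_nonneg : ∀ s, a < s → 0 ≤ f s) (hf_pos : ∀ s, b < s → 0 < f s) :
    0 < ∫ s in Ioi a, f s := by
  rw [setIntegral_pos_iff_support_of_nonneg_ae
    (ae_restrict_of_forall_mem measurableSet_Ioi hf_nonneg) hf]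
  calc (0 : ENNReal) < volume (Ioi (max a b)) := by simp
    _ ≤ volume (Function.support f ∩ Ioi a) := measure_mono fun s hs =>
      ⟨(hf_pos s ((le_max_right a b).trans_lt hs)).ne', (le_max_left a b).trans_lt hs⟩

theorem setIntegral_Ioi_lt_of_lt {f g : ℝ → ℝ} {a : ℝ} (hf : IntegrableOn f (Ioi a))
    (hg : IntegrableOn g (Ioi a)) (hlt : ∀ s, a < s → f s < g s) :
    ∫ s in Ioi a, f s < ∫ s in Ioi a, g s := by
  have := setIntegral_Ioi_pos (f := fun s => g s - f s) (hg.sub hf)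
    (fun s hs => (sub_pos.2 (hlt s hs)).le) fun s hs => sub_pos.2 (hlt s hs)
  rwa [integral_sub hg hf, sub_pos] at this

theorem hasDerivAt_integral_Ioi {f : ℝ → ℝ} {a t : ℝ} (hf : IntegrableOn f (Ioi a))
    (ht : a < t) (hft : ContinuousAt f t) :
    HasDerivAt (fun u => ∫ s in Ioi u, f s) (-f t) t := by
  have hprim : HasDerivAt (fun u => ∫ s in a..u, f s) (f t) t :=
    intervalIntegral.integral_hasDerivAt_right
      ((intervalIntegrable_iff_integrableOn_Ioc_of_le ht.le).2 (hf.mono_set Ioc_subset_Ioi_self))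
      ⟨Ioi a, Ioi_mem_nhds ht, hf.aestronglyMeasurable⟩ hft
  refine (hprim.const_sub (∫ s in Ioi a, f s)).congr_of_eventuallyEq ?_
  filter_upwards [Ioi_mem_nhds ht] with u hu
  rw [← intervalIntegral.integral_Ioi_sub_Ioi hf hu.le, sub_sub_cancel]

theorem hasDerivWithinAt_integral_Ici {F : ℝ → ℝ} {a t : ℝ} (hF : ContinuousOn F (Ici a))
    (ht : a ≤ t) : HasDerivWithinAt (fun u => ∫ v in a..u, F v) (F t) (Ici a) t := by
  have hG : Continuous fun u => F (max a u) :=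
    hF.comp_continuous (continuous_const.max continuous_id) fun u => le_max_left a u
  have heq : ∀ u ∈ Ici a, ∫ v in a..u, F v = ∫ v in a..u, F (max a v) := fun u hu =>
    intervalIntegral.integral_congr fun v hv => by
      rw [uIcc_of_le hu] at hv
      rw [max_eq_right hv.1]
  have := (hG.integral_hasStrictDerivAt a t).hasDerivAt.hasDerivWithinAt (s := Ici a)
  rw [max_eq_right ht] at this
  exact this.congr heq (heq t ht)

theorem integrableOn_Ioi_const_mul_exp_neg (c a : ℝ) :
    IntegrableOn (fun s => c * exp (-s)) (Ioi a) := by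
  simpa [IntegrableOn] using (exp_neg_integrableOn_Ioi a one_pos).const_mul c

theorem exp_mul_integral_Ioi_const_mul_exp_neg (c t : ℝ) :
    exp t * ∫ s in Ioi t, c * exp (-s) = c := by
  rw [integral_const_mul, integral_exp_neg_Ioi, mul_left_comm, ← exp_add, add_neg_cancel,
    exp_zero, mul_one]

theorem baPhi_zero (lam : ℝ) : baPhi lam 0 = 0 := by simp [baPhi]

theorem baPhi_strictMono {lam : ℝ} (hlam : 0 < lam) : StrictMono (baPhi lam) := fun _ _ hyz =>
  mul_lt_mul_of_pos_left (sub_lt_sub_left (exp_lt_exp.2 (neg_lt_neg hyz)) 1) hlam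

theorem baPhi_pos {lam y : ℝ} (hlam : 0 < lam) (hy : 0 < y) : 0 < baPhi lam y :=
  baPhi_zero lam ▸ baPhi_strictMono hlam hy

theorem baPhi_nonneg {lam y : ℝ} (hlam : 0 < lam) (hy : 0 ≤ y) : 0 ≤ baPhi lam y :=
  baPhi_zero lam ▸ (baPhi_strictMono hlam).monotone hy

theorem baPhi_lt {lam : ℝ} (hlam : 0 < lam) (y : ℝ) : baPhi lam y < lam :=
  mul_lt_of_lt_one_right hlam (sub_lt_self 1 (exp_pos _))

theorem continuous_baPhi (lam : ℝ) : Continuous (baPhi lam) := by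
  unfold baPhi
  fun_prop

theorem tendsto_baPhi_atTop (lam : ℝ) : Tendsto (baPhi lam) atTop (𝓝 lam) := by
  unfold baPhi
  simpa using (tendsto_exp_neg_atTop_nhds_zero.const_sub 1).const_mul lam

noncomputable def baIntegrand (lam : ℝ) (x : ℝ → ℝ) (s : ℝ) : ℝ :=
  baPhi lam (x s) * exp (-s)

noncomputable def baSlope (lam : ℝ) (x : ℝ → ℝ) (t : ℝ) : ℝ :=
  exp t * ∫ s in Ioi t, baIntegrand lam x s

theorem baSlope_eq_zero_of_not_aestronglyMeasurable {lam : ℝ} {x : ℝ → ℝ} {u : ℝ}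
    (h : ¬ AEStronglyMeasurable (baIntegrand lam x) (volume.restrict (Ioi u))) :
    baSlope lam x u = 0 := by
  rw [baSlope, integral_undef fun hi => h hi.aestronglyMeasurable, mul_zero]

namespace IsBAFixedPoint

variable {lam : ℝ} {x : ℝ → ℝ} (hx : IsBAFixedPoint lam x)
include hx

theorem nonneg {t : ℝ} (ht : 0 ≤ t) : 0 ≤ x t :=
  hx.1 t ht

theorem exists_ne_zero : ∃ t, 0 ≤ t ∧ x t ≠ 0 :=
  hx.2.2.2.1

theorem eq_integral_baSlope {t : ℝ} (ht : 0 ≤ t) :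
    x t = ∫ u in (0 : ℝ)..t, baSlope lam x u :=
  hx.2.2.2.2 t ht

theorem eq_zero_of_forall_baSlope_eq_zero {t : ℝ} (ht : 0 ≤ t)
    (h : ∀ u ∈ Ioo 0 t, baSlope lam x u = 0) : x t = 0 := by
  rw [hx.eq_integral_baSlope ht, intervalIntegral.integral_of_le ht,
    integral_Ioc_eq_integral_Ioo, setIntegral_congr_fun measurableSet_Ioo h, integral_zero]

theorem baIntegrand_nonneg (hlam : 0 < lam) {s : ℝ} (hs : 0 ≤ s) : 0 ≤ baIntegrand lam x s :=
  mul_nonneg (baPhi_nonneg hlam (hx.nonneg hs)) (exp_nonneg _)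

/-- Where the integrand is not a.e.-measurable, its tail integrals take the junk value `0`.
This forces `x`, hence the integrand, to vanish up to the infimum of the points beyond which
the integrand is a.e.-measurable. -/
theorem aestronglyMeasurable_baIntegrand :
    AEStronglyMeasurable (baIntegrand lam x) (volume.restrict (Ioi 0)) := by
  set S :=
    {u : ℝ | 0 ≤ u ∧ AEStronglyMeasurable (baIntegrand lam x) (volume.restrict (Ioi u))}
  have vanish : ∀ t, 0 ≤ t → (∀ v ∈ Ioo 0 t, v ∉ S) → x t = 0 := fun t ht hS =>
    hx.eq_zero_of_forall_baSlope_eq_zero ht fun v hv =>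
      baSlope_eq_zero_of_not_aestronglyMeasurable fun hm => hS v hv ⟨hv.1.le, hm⟩
  have hS : S.Nonempty := by
    obtain ⟨t₀, ht₀, hxt₀⟩ := hx.exists_ne_zero
    by_contra hS
    exact hxt₀ (vanish t₀ ht₀ fun v _ hv => hS ⟨v, hv⟩)
  have hS_bdd : BddBelow S := ⟨0, fun _ hu => hu.1⟩
  have hb : 0 ≤ sInf S := le_csInf hS fun _ hu => hu.1
  have hIoi : AEStronglyMeasurable (baIntegrand lam x) (volume.restrict (Ioi (sInf S))) :=
    aestronglyMeasurable_restrict_Ioi_of_forall_gt fun u hu => by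
      obtain ⟨v, hvS, hvu⟩ := exists_lt_of_csInf_lt hS hu
      exact hvS.2.mono_measure (Measure.restrict_mono (Ioi_subset_Ioi hvu.le) le_rfl)
  have hIoc : AEStronglyMeasurable (baIntegrand lam x) (volume.restrict (Ioc 0 (sInf S))) := by
    refine (aestronglyMeasurable_const (b := (0 : ℝ))).congr
      (ae_restrict_of_forall_mem measurableSet_Ioc ?_)
    intro t ht
    have hxt : x t = 0 := vanish t ht.1.le fun v hv hvS =>
      (hv.2.trans_le ht.2).not_ge (csInf_le hS_bdd hvS)
    simp [baIntegrand, hxt, baPhi_zero]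
  rw [← Ioc_union_Ioi_eq_Ioi hb, aestronglyMeasurable_union_iff]
  exact ⟨hIoc, hIoi⟩

theorem integrableOn_baIntegrand (hlam : 0 < lam) {a : ℝ} (ha : 0 ≤ a) :
    IntegrableOn (baIntegrand lam x) (Ioi a) := by
  refine (integrableOn_Ioi_const_mul_exp_neg lam a).mono'
    (hx.aestronglyMeasurable_baIntegrand.mono_measure
      (Measure.restrict_mono (Ioi_subset_Ioi ha) le_rfl))
    (ae_restrict_of_forall_mem measurableSet_Ioi fun s hs => ?_)
  rw [Real.norm_of_nonneg (hx.baIntegrand_nonneg hlam (ha.trans hs.le))]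
  exact mul_le_mul_of_nonneg_right (baPhi_lt hlam _).le (exp_nonneg _)

theorem continuousOn_baSlope (hlam : 0 < lam) : ContinuousOn (baSlope lam x) (Ici 0) :=
  continuous_exp.continuousOn.mul
    (hx.integrableOn_baIntegrand hlam le_rfl).continuousOn_Ici_primitive_Ioi

theorem hasDerivWithinAt (hlam : 0 < lam) {t : ℝ} (ht : 0 ≤ t) :
    HasDerivWithinAt x (baSlope lam x t) (Ici 0) t :=
  (hasDerivWithinAt_integral_Ici (hx.continuousOn_baSlope hlam) ht).congr
    (fun _ hu => hx.eq_integral_baSlope hu) (hx.eq_integral_baSlope ht)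

theorem derivWithin_eq_baSlope (hlam : 0 < lam) {t : ℝ} (ht : 0 ≤ t) :
    derivWithin x (Ici 0) t = baSlope lam x t :=
  (hx.hasDerivWithinAt hlam ht).derivWithin (uniqueDiffOn_Ici 0 t ht)

theorem continuousOn (hlam : 0 < lam) : ContinuousOn x (Ici 0) := fun _ ht =>
  (hx.hasDerivWithinAt hlam ht).continuousWithinAt

theorem baSlope_nonneg (hlam : 0 < lam) {t : ℝ} (ht : 0 ≤ t) : 0 ≤ baSlope lam x t :=
  mul_nonneg (exp_nonneg t) (setIntegral_nonneg measurableSet_Ioi fun _ hs =>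
    hx.baIntegrand_nonneg hlam (ht.trans (le_of_lt hs)))

theorem monotoneOn (hlam : 0 < lam) : MonotoneOn x (Ici 0) :=
  monotoneOn_of_hasDerivWithinAt_nonneg (convex_Ici 0) (hx.continuousOn hlam)
    (fun _ ht => (hx.hasDerivWithinAt hlam (interior_subset ht)).mono interior_subset)
    fun _ ht => hx.baSlope_nonneg hlam (interior_subset ht)

theorem baSlope_pos (hlam : 0 < lam) {t : ℝ} (ht : 0 ≤ t) : 0 < baSlope lam x t := by
  obtain ⟨t₀, ht₀, hxt₀⟩ := hx.exists_ne_zero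
  have hpos : 0 < x t₀ := (hx.nonneg ht₀).lt_of_ne' hxt₀
  refine mul_pos (exp_pos t) (setIntegral_Ioi_pos (hx.integrableOn_baIntegrand hlam ht)
    (fun s hs => hx.baIntegrand_nonneg hlam (ht.trans hs.le)) (b := t₀) fun s hs => ?_)
  have hxs : x t₀ ≤ x s := hx.monotoneOn hlam ht₀ (ht₀.trans hs.le) hs.le
  exact mul_pos (baPhi_pos hlam (hpos.trans_le hxs)) (exp_pos _)

theorem strictMonoOn (hlam : 0 < lam) : StrictMonoOn x (Ici 0) :=
  strictMonoOn_of_hasDerivWithinAt_pos (convex_Ici 0) (hx.continuousOn hlam)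
    (fun _ ht => (hx.hasDerivWithinAt hlam (interior_subset ht)).mono interior_subset)
    fun _ ht => hx.baSlope_pos hlam (interior_subset ht)

theorem baSlope_lt (hlam : 0 < lam) {t : ℝ} (ht : 0 ≤ t) : baSlope lam x t < lam :=
  calc baSlope lam x t < exp t * ∫ s in Ioi t, lam * exp (-s) :=
        mul_lt_mul_of_pos_left (setIntegral_Ioi_lt_of_lt (hx.integrableOn_baIntegrand hlam ht)
          (integrableOn_Ioi_const_mul_exp_neg lam t)
          fun _ _ => mul_lt_mul_of_pos_right (baPhi_lt hlam _) (exp_pos _)) (exp_pos t)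
    _ = lam := exp_mul_integral_Ioi_const_mul_exp_neg lam t

theorem baPhi_lt_baSlope (hlam : 0 < lam) {t : ℝ} (ht : 0 ≤ t) :
    baPhi lam (x t) < baSlope lam x t :=
  calc baPhi lam (x t) = exp t * ∫ s in Ioi t, baPhi lam (x t) * exp (-s) :=
        (exp_mul_integral_Ioi_const_mul_exp_neg _ t).symm
    _ < baSlope lam x t :=
        mul_lt_mul_of_pos_left (setIntegral_Ioi_lt_of_lt
          (integrableOn_Ioi_const_mul_exp_neg _ t) (hx.integrableOn_baIntegrand hlam ht)
          fun _ hs => mul_lt_mul_of_pos_right (baPhi_strictMono hlam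
            (hx.strictMonoOn hlam ht (ht.trans hs.le) hs)) (exp_pos _)) (exp_pos t)

theorem hasDerivAt_baSlope (hlam : 0 < lam) {t : ℝ} (ht : 0 < t) :
    HasDerivAt (baSlope lam x) (baSlope lam x t - baPhi lam (x t)) t := by
  have hcont : ContinuousAt (baIntegrand lam x) t :=
    ((continuous_baPhi lam).continuousAt.comp
      ((hx.continuousOn hlam).continuousAt (Ici_mem_nhds ht))).mul
      (continuous_exp.comp continuous_neg).continuousAt
  have hexp : exp t * baIntegrand lam x t = baPhi lam (x t) := by
    rw [baIntegrand, mul_left_comm, ← exp_add, add_neg_cancel, exp_zero, mul_one]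
  refine ((hasDerivAt_exp t).mul
    (hasDerivAt_integral_Ioi (hx.integrableOn_baIntegrand hlam le_rfl) ht hcont)).congr_deriv ?_
  rw [mul_neg, hexp, baSlope, sub_eq_add_neg]

theorem strictMonoOn_baSlope (hlam : 0 < lam) : StrictMonoOn (baSlope lam x) (Ici 0) :=
  strictMonoOn_of_hasDerivWithinAt_pos (convex_Ici 0) (hx.continuousOn_baSlope hlam)
    (fun _ ht => (hx.hasDerivAt_baSlope hlam (by rwa [interior_Ici] at ht)).hasDerivWithinAt)
    fun _ ht => sub_pos.2 (hx.baPhi_lt_baSlope hlam (interior_subset ht))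

theorem tendsto_atTop (hlam : 0 < lam) : Tendsto x atTop atTop := by
  refine tendsto_atTop_mono' atTop ?_ (tendsto_id.const_mul_atTop (hx.baSlope_pos hlam le_rfl))
  filter_upwards [eventually_ge_atTop 0] with t ht
  rw [hx.eq_integral_baSlope ht]
  calc baSlope lam x 0 * id t = ∫ _ in (0 : ℝ)..t, baSlope lam x 0 := by simp [mul_comm]
    _ ≤ ∫ u in (0 : ℝ)..t, baSlope lam x u :=
      intervalIntegral.integral_mono_on ht intervalIntegrable_const
        (((hx.continuousOn_baSlope hlam).mono Icc_subset_Ici_self).intervalIntegrable_of_Icc ht)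
        fun _ hu => (hx.strictMonoOn_baSlope hlam).monotoneOn self_mem_Ici hu.1 hu.1

theorem tendsto_baSlope (hlam : 0 < lam) : Tendsto (baSlope lam x) atTop (𝓝 lam) :=
  tendsto_of_tendsto_of_tendsto_of_le_of_le'
    ((tendsto_baPhi_atTop lam).comp (hx.tendsto_atTop hlam)) tendsto_const_nhds
    (by filter_upwards [eventually_ge_atTop 0] with t ht using (hx.baPhi_lt_baSlope hlam ht).le)
    (by filter_upwards [eventually_ge_atTop 0] with t ht using (hx.baSlope_lt hlam ht).le)

end IsBAFixedPoint

/-- for a BA fixed point, x'(0) > 0, the point (x(t), x'(t)) lies in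
Δ = {(x₁,x₂) : φ_λ(x₁) < x₂ < λ} for every t ≥ 0, x' is increasing, and x'(t) → λ. -/
theorem ba_fixed_point_phase_portrait {lam : ℝ} (hlam : 0 < lam) {x : ℝ → ℝ}
    (hx : IsBAFixedPoint lam x) :
    0 < derivWithin x (Set.Ici 0) 0 ∧
    (∀ t, 0 ≤ t →
      baPhi lam (x t) < derivWithin x (Set.Ici 0) t ∧
      derivWithin x (Set.Ici 0) t < lam) ∧
    StrictMonoOn (derivWithin x (Set.Ici 0)) (Set.Ici 0) ∧
    Filter.Tendsto (derivWithin x (Set.Ici 0)) Filter.atTop (nhds lam) := by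
  have hD : ∀ t, 0 ≤ t → derivWithin x (Ici 0) t = baSlope lam x t := fun _ ht =>
    hx.derivWithin_eq_baSlope hlam ht
  refine ⟨?_, fun t ht => ?_, ?_, ?_⟩
  · rw [hD 0 le_rfl]
    exact hx.baSlope_pos hlam le_rfl
  · rw [hD t ht]
    exact ⟨hx.baPhi_lt_baSlope hlam ht, hx.baSlope_lt hlam ht⟩
  · exact (hx.strictMonoOn_baSlope hlam).congr fun t ht => (hD t ht).symm
  · refine (hx.tendsto_baSlope hlam).congr' ?_
    filter_upwards [eventually_ge_atTop 0] with t ht using (hD t ht).symm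
end

section
/- Let x be a CE fixed point for λ ∈ (0,1). Then: (i) for all t > 0, ρ < x(t) < 1; and (ii) for all t ≥ 0, −1 < x'(t) < 0. -/
open MeasureTheory

/-- Generating function ψ(x) = Σ_{k≥0} P(k) x^k. -/
noncomputable def genFun (P : ℕ → ℝ) (x : ℝ) : ℝ := ∑' k : ℕ, P k * x ^ k

/-- Context: P is a probability distribution on ℕ with mean d ∈ (1,∞), and ρ ∈ [0,1)
is the smallest fixed point of its generating function on [0,1]. -/
structure CEContext (P : ℕ → ℝ) (d ρ : ℝ) : Prop where
  P_nonneg : ∀ k, 0 ≤ P k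
  P_sum_one : ∑' k : ℕ, P k = 1
  mean_summable : Summable (fun k : ℕ => (k : ℝ) * P k)
  mean_eq : ∑' k : ℕ, (k : ℝ) * P k = d
  d_gt_one : 1 < d
  rho_nonneg : 0 ≤ ρ
  rho_lt_one : ρ < 1
  rho_fixed : genFun P ρ = ρ
  rho_least : ∀ y : ℝ, 0 ≤ y → y ≤ 1 → genFun P y = y → ρ ≤ y

/-- A CE fixed point for infection rate λ ∈ (0,1): x : [0,∞) → [0,1] non-increasing,
x(0) = 1, x(t) → ρ, and
x(t) = e^{−λt} + λ e^{−λt} ∫₀ᵗ e^{(λ+1)u} (∫_u^∞ ψ(x(s)) e^{−s} ds) du. -/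
def IsCEFixedPoint (P : ℕ → ℝ) (ρ lam : ℝ) (x : ℝ → ℝ) : Prop :=
  (∀ t, 0 ≤ t → x t ∈ Set.Icc (0 : ℝ) 1) ∧
  AntitoneOn x (Set.Ici 0) ∧
  x 0 = 1 ∧
  Filter.Tendsto x Filter.atTop (nhds ρ) ∧
  (∀ t, 0 ≤ t →
    x t = Real.exp (-(lam * t)) + lam * Real.exp (-(lam * t)) *
      ∫ u in (0:ℝ)..t, Real.exp ((lam + 1) * u) *
        ∫ s in Set.Ioi u, genFun P (x s) * Real.exp (-s))

/-!
With `H u = e^u ∫_u^∞ ψ(x s) e^{-s} ds`, an exponentially weighted average of `ψ ∘ x` over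
`(u, ∞)`, the fixed-point equation says that `x` solves `x' = λ (H - x)`, `x 0 = 1`, and this
solution depends monotonically (strictly, for continuous data) on `H`. Convexity of `ψ` and its
fixed points `ρ` and `1` give `ρ ≤ ψ y ≤ y` on `[ρ, 1]`; hence `ρ ≤ H`, and since `x` is
non-increasing with limit `ρ < x u`, also `H u < x u`. Comparing with the constant data `ρ` and
`1` gives `ρ < x < 1`, and then `x' = λ (H - x) ∈ [-λ, 0)`.
-/

open Set Real Filter

theorem integrableOn_mul_exp_neg_Ioi {g : ℝ → ℝ} {C : ℝ} (hgm : AEStronglyMeasurable g)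
    (hgC : ∀ s, ‖g s‖ ≤ C) (a : ℝ) : IntegrableOn (fun s => g s * exp (-s)) (Ioi a) :=
  Integrable.bdd_mul (integrableOn_exp_neg_Ioi a) hgm.restrict (ae_of_all _ hgC)

theorem continuous_integral_Ioi {f : ℝ → ℝ} (hf : ∀ a, IntegrableOn f (Ioi a)) :
    Continuous fun u => ∫ s in Ioi u, f s := by
  have hii : ∀ a b, IntervalIntegrable f volume a b := fun a b =>
    (intervalIntegrable_iff.2 <| (hf (min a b - 1)).mono_set fun s hs =>
      mem_Ioi.2 (by linarith [hs.1, min_le_left a b, min_le_right a b]))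
  refine ((continuous_const (y := ∫ s in Ioi 0, f s)).sub
    (intervalIntegral.continuous_primitive hii 0)).congr fun u => ?_
  simp only [Pi.sub_apply, ← intervalIntegral.integral_interval_add_Ioi (hf 0) (hf u)]
  ring

noncomputable def expTailAvg (g : ℝ → ℝ) (u : ℝ) : ℝ :=
  exp u * ∫ s in Ioi u, g s * exp (-s)

section expTailAvg

variable {g : ℝ → ℝ} {u c : ℝ}

theorem continuous_expTailAvg (hg : ∀ a, IntegrableOn (fun s => g s * exp (-s)) (Ioi a)) :
    Continuous (expTailAvg g) :=
  continuous_exp.mul (continuous_integral_Ioi hg)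

theorem expTailAvg_const : expTailAvg (fun _ => c) u = c := by
  rw [expTailAvg, integral_const_mul, integral_exp_neg_Ioi, mul_left_comm, ← exp_add,
    add_neg_cancel, exp_zero, mul_one]

theorem le_expTailAvg (hg : IntegrableOn (fun s => g s * exp (-s)) (Ioi u))
    (hc : ∀ s ∈ Ioi u, c ≤ g s) : c ≤ expTailAvg g u := by
  have hexp : IntegrableOn (fun s => c * exp (-s)) (Ioi u) :=
    (integrableOn_exp_neg_Ioi u).const_mul c
  calc c = expTailAvg (fun _ => c) u := expTailAvg_const.symm
    _ ≤ expTailAvg g u :=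
      mul_le_mul_of_nonneg_left (setIntegral_mono_on hexp hg measurableSet_Ioi fun s hs =>
        mul_le_mul_of_nonneg_right (hc s hs) (exp_pos _).le) (exp_pos u).le

theorem expTailAvg_lt (hg : IntegrableOn (fun s => g s * exp (-s)) (Ioi u))
    (hle : ∀ s ∈ Ioi u, g s ≤ c) (hlt : ∀ᶠ s in atTop, g s < c) : expTailAvg g u < c := by
  have hexp : IntegrableOn (fun s => c * exp (-s)) (Ioi u) :=
    (integrableOn_exp_neg_Ioi u).const_mul c
  obtain ⟨b, hb⟩ := eventually_atTop.1 hlt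
  have hpos : 0 < ∫ s in Ioi u, (c * exp (-s) - g s * exp (-s)) := by
    refine (setIntegral_pos_iff_support_of_nonneg_ae ?_ (hexp.sub hg)).2 ?_
    · refine (ae_restrict_mem measurableSet_Ioi).mono fun s hs => ?_
      exact sub_nonneg.2 (mul_le_mul_of_nonneg_right (hle s hs) (exp_pos _).le)
    · refine lt_of_lt_of_le ?_ (measure_mono (s := Ioi (max u b)) fun s hs => ⟨?_, ?_⟩)
      · simp
      · have := hb s (le_max_right u b |>.trans hs.le)
        exact sub_ne_zero.2 (mul_lt_mul_of_pos_right this (exp_pos _)).ne'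
      · exact (le_max_left u b).trans_lt hs
  rw [integral_sub hexp hg] at hpos
  calc expTailAvg g u < expTailAvg (fun _ => c) u :=
        mul_lt_mul_of_pos_left (sub_pos.1 hpos) (exp_pos u)
    _ = c := expTailAvg_const

end expTailAvg

/-- The solution of `y' = lam * (H - y)`, `y 0 = 1`. -/
noncomputable def relaxation (lam : ℝ) (H : ℝ → ℝ) (t : ℝ) : ℝ :=
  exp (-(lam * t)) + lam * exp (-(lam * t)) * ∫ u in (0 : ℝ)..t, exp (lam * u) * H u

section relaxation

variable {lam t : ℝ} {H H' : ℝ → ℝ}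

theorem relaxation_const (hlam : lam ≠ 0) (c : ℝ) :
    relaxation lam (fun _ => c) t = c + (1 - c) * exp (-(lam * t)) := by
  have hint : ∫ u in (0 : ℝ)..t, exp (lam * u) = (exp (lam * t) - 1) / lam := by
    rw [intervalIntegral.integral_comp_mul_left (fun u => exp u) hlam, integral_exp,
      smul_eq_mul, mul_zero, exp_zero]
    field_simp
  have hinv : exp (-(lam * t)) * exp (lam * t) = 1 := by rw [← exp_add, neg_add_cancel, exp_zero]
  rw [relaxation, intervalIntegral.integral_mul_const, hint]
  field_simp
  linear_combination c * hinv

theorem relaxation_mono (hlam : 0 ≤ lam) (ht : 0 ≤ t) (hH : ContinuousOn H (Icc 0 t))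
    (hH' : ContinuousOn H' (Icc 0 t)) (hle : ∀ u ∈ Icc 0 t, H u ≤ H' u) :
    relaxation lam H t ≤ relaxation lam H' t := by
  have hE : ContinuousOn (fun u => exp (lam * u)) (Icc 0 t) := by fun_prop
  have hint := intervalIntegral.integral_mono_on (μ := volume) ht
    ((hE.mul hH).intervalIntegrable_of_Icc ht) ((hE.mul hH').intervalIntegrable_of_Icc ht)
    fun u hu => mul_le_mul_of_nonneg_left (hle u hu) (exp_pos _).le
  unfold relaxation
  gcongr
  exact hint

theorem relaxation_lt_relaxation (hlam : 0 < lam) (ht : 0 < t) (hH : ContinuousOn H (Icc 0 t))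
    (hH' : ContinuousOn H' (Icc 0 t)) (hlt : ∀ u ∈ Icc 0 t, H u < H' u) :
    relaxation lam H t < relaxation lam H' t := by
  have hE : ContinuousOn (fun u => exp (lam * u)) (Icc 0 t) := by fun_prop
  have hint := intervalIntegral.integral_lt_integral_of_continuousOn_of_le_of_exists_lt ht
    (hE.mul hH) (hE.mul hH')
    (fun u hu => mul_le_mul_of_nonneg_left (hlt u (Ioc_subset_Icc_self hu)).le (exp_pos _).le)
    ⟨0, left_mem_Icc.2 ht.le, mul_lt_mul_of_pos_left (hlt 0 (left_mem_Icc.2 ht.le)) (exp_pos _)⟩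
  unfold relaxation
  gcongr
  exact hint

theorem hasDerivAt_relaxation (hH : Continuous H) (t : ℝ) :
    HasDerivAt (relaxation lam H) (lam * (H t - relaxation lam H t)) t := by
  have hI : HasDerivAt (fun r => ∫ u in (0 : ℝ)..r, exp (lam * u) * H u)
      (exp (lam * t) * H t) t := by
    have hc : Continuous fun u => exp (lam * u) * H u := by fun_prop
    exact intervalIntegral.integral_hasDerivAt_right (hc.intervalIntegrable 0 t)
      (hc.stronglyMeasurableAtFilter volume _) hc.continuousAt
  have hE : HasDerivAt (fun r => exp (-(lam * r))) (exp (-(lam * t)) * -lam) t := by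
    simpa using ((hasDerivAt_id t).const_mul lam).neg.exp
  have hinv : exp (-(lam * t)) * exp (lam * t) = 1 := by rw [← exp_add, neg_add_cancel, exp_zero]
  unfold relaxation
  refine (hE.add ((hE.const_mul lam).mul hI)).congr_deriv ?_
  linear_combination (lam * H t) * hinv

end relaxation

theorem genFun_one {P : ℕ → ℝ} (hone : ∑' k, P k = 1) : genFun P 1 = 1 := by
  simpa [genFun] using hone

section genFun

variable {P : ℕ → ℝ} (hP : ∀ k, 0 ≤ P k) (hsum : Summable P)
include hP hsum

theorem summable_genFun {y : ℝ} (hy : y ∈ Icc (0 : ℝ) 1) :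
    Summable fun k => P k * y ^ k :=
  .of_nonneg_of_le (fun k => mul_nonneg (hP k) (pow_nonneg hy.1 k))
    (fun k => mul_le_of_le_one_right (hP k) (pow_le_one₀ hy.1 hy.2)) hsum

theorem monotoneOn_genFun : MonotoneOn (genFun P) (Icc 0 1) := fun _ ha _ hb hab =>
  Summable.tsum_le_tsum (fun k => mul_le_mul_of_nonneg_left (pow_le_pow_left₀ ha.1 hab k) (hP k))
    (summable_genFun hP hsum ha) (summable_genFun hP hsum hb)

theorem convexOn_genFun : ConvexOn ℝ (Icc 0 1) (genFun P) := by
  refine ⟨convex_Icc 0 1, fun a ha b hb μ ν hμ hν hμν => ?_⟩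
  have hterm (k : ℕ) :
      P k * (μ • a + ν • b) ^ k ≤ μ * (P k * a ^ k) + ν * (P k * b ^ k) := by
    have := (convexOn_pow k).2 (mem_Ici.2 ha.1) (mem_Ici.2 hb.1) hμ hν hμν
    simp only [smul_eq_mul] at this ⊢
    nlinarith [mul_le_mul_of_nonneg_left this (hP k)]
  have hsa := summable_genFun hP hsum ha
  have hsb := summable_genFun hP hsum hb
  calc genFun P (μ • a + ν • b)
      ≤ ∑' k, (μ * (P k * a ^ k) + ν * (P k * b ^ k)) :=
        Summable.tsum_le_tsum hterm
          (summable_genFun hP hsum ((convex_Icc 0 1) ha hb hμ hν hμν))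
          ((hsa.mul_left μ).add (hsb.mul_left ν))
    _ = μ • genFun P a + ν • genFun P b := by
        rw [Summable.tsum_add (hsa.mul_left μ) (hsb.mul_left ν), tsum_mul_left, tsum_mul_left]
        rfl

end genFun

namespace CEContext

variable {P : ℕ → ℝ} {d ρ : ℝ}

theorem summable (h : CEContext P d ρ) : Summable P := by
  by_contra hns
  exact zero_ne_one ((tsum_eq_zero_of_not_summable hns).symm.trans h.P_sum_one)

theorem genFun_mem_Icc (h : CEContext P d ρ) {y : ℝ} (hy : y ∈ Icc ρ 1) :
    genFun P y ∈ Icc ρ y := by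
  have hρ : ρ ∈ Icc (0 : ℝ) 1 := ⟨h.rho_nonneg, h.rho_lt_one.le⟩
  have hy' : y ∈ Icc (0 : ℝ) 1 := ⟨hρ.1.trans hy.1, hy.2⟩
  refine ⟨h.rho_fixed ▸ monotoneOn_genFun h.P_nonneg h.summable hρ hy' hy.1, ?_⟩
  -- `ψ` lies below its chord between the fixed points `ρ` and `1`
  set θ := (y - ρ) / (1 - ρ)
  have h1ρ : 0 < 1 - ρ := sub_pos.2 h.rho_lt_one
  have hθ : θ ∈ Icc (0 : ℝ) 1 :=
    ⟨div_nonneg (sub_nonneg.2 hy.1) h1ρ.le, (div_le_one h1ρ).2 (by linarith [hy.2])⟩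
  have hyθ : (1 - θ) • ρ + θ • (1 : ℝ) = y := by
    simp only [smul_eq_mul, θ]
    field_simp
    ring
  have := (convexOn_genFun h.P_nonneg h.summable).2 hρ ⟨zero_le_one, le_rfl⟩
    (sub_nonneg.2 hθ.2) hθ.1 (sub_add_cancel 1 θ)
  rwa [h.rho_fixed, genFun_one h.P_sum_one, hyθ] at this

end CEContext

/-- `x` is only constrained on `[0, ∞)`; extending it by `x 0` to the left makes the averaged
function antitone on all of `ℝ`. -/
noncomputable def ceForcing (P : ℕ → ℝ) (x : ℝ → ℝ) : ℝ → ℝ :=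
  expTailAvg fun s => genFun P (x (max s 0))

namespace IsCEFixedPoint

variable {P : ℕ → ℝ} {d ρ lam : ℝ} {x : ℝ → ℝ}

theorem mem_Icc (hx : IsCEFixedPoint P ρ lam x) {t : ℝ} (ht : 0 ≤ t) : x t ∈ Icc ρ 1 := by
  obtain ⟨hmem, hanti, -, hlim, -⟩ := hx
  exact ⟨le_of_tendsto hlim (eventually_atTop.2 ⟨t, fun _ hs => hanti ht (ht.trans hs) hs⟩),
    (hmem t ht).2⟩

theorem eq_relaxation (hx : IsCEFixedPoint P ρ lam x) {t : ℝ} (ht : 0 ≤ t) :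
    x t = relaxation lam (ceForcing P x) t := by
  rw [hx.2.2.2.2 t ht, relaxation]
  congr 2
  refine intervalIntegral.integral_congr fun u hu => ?_
  rw [uIcc_of_le ht] at hu
  have hmax : ∀ s ∈ Ioi u, genFun P (x s) * exp (-s) = genFun P (x (max s 0)) * exp (-s) :=
    fun s hs => by rw [max_eq_left (hu.1.trans hs.le)]
  simp only [ceForcing, expTailAvg, setIntegral_congr_fun measurableSet_Ioi hmax, ← mul_assoc,
    ← exp_add, add_mul, one_mul]

theorem integrableOn_forcing (hctx : CEContext P d ρ) (hx : IsCEFixedPoint P ρ lam x) (a : ℝ) :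
    IntegrableOn (fun s => genFun P (x (max s 0)) * exp (-s)) (Ioi a) := by
  have hmem (s : ℝ) := hctx.genFun_mem_Icc (hx.mem_Icc (le_max_right s 0))
  have hanti : Antitone fun s => genFun P (x (max s 0)) := fun a b hab =>
    monotoneOn_genFun hctx.P_nonneg hctx.summable (hx.1 _ (le_max_right b 0))
      (hx.1 _ (le_max_right a 0))
      (hx.2.1 (le_max_right a 0) (le_max_right b 0) (max_le_max_right 0 hab))
  refine integrableOn_mul_exp_neg_Ioi hanti.measurable.aestronglyMeasurable (C := 1)
    (fun s => ?_) a
  rw [Real.norm_eq_abs, abs_le]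
  exact ⟨by linarith [hctx.rho_nonneg, (hmem s).1],
    (hmem s).2.trans (hx.mem_Icc (le_max_right s 0)).2⟩

theorem rho_le_ceForcing (hctx : CEContext P d ρ) (hx : IsCEFixedPoint P ρ lam x) (u : ℝ) :
    ρ ≤ ceForcing P x u :=
  le_expTailAvg (hx.integrableOn_forcing hctx u) fun s _ =>
    (hctx.genFun_mem_Icc (hx.mem_Icc (le_max_right s 0))).1

theorem continuous_ceForcing (hctx : CEContext P d ρ) (hx : IsCEFixedPoint P ρ lam x) :
    Continuous (ceForcing P x) :=
  continuous_expTailAvg (hx.integrableOn_forcing hctx)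

theorem rho_lt (hctx : CEContext P d ρ) (hx : IsCEFixedPoint P ρ lam x) (hlam : 0 < lam)
    {t : ℝ} (ht : 0 ≤ t) : ρ < x t :=
  calc ρ < ρ + (1 - ρ) * exp (-(lam * t)) :=
        lt_add_of_pos_right ρ (mul_pos (sub_pos.2 hctx.rho_lt_one) (exp_pos _))
    _ = relaxation lam (fun _ => ρ) t := (relaxation_const hlam.ne' ρ).symm
    _ ≤ relaxation lam (ceForcing P x) t :=
        relaxation_mono hlam.le ht continuousOn_const (hx.continuous_ceForcing hctx).continuousOn
          fun u _ => hx.rho_le_ceForcing hctx u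
    _ = x t := (hx.eq_relaxation ht).symm

theorem ceForcing_lt (hctx : CEContext P d ρ) (hx : IsCEFixedPoint P ρ lam x) (hlam : 0 < lam)
    {u : ℝ} (hu : 0 ≤ u) : ceForcing P x u < x u := by
  have hle : ∀ s, 0 ≤ s → genFun P (x (max s 0)) ≤ x s := fun s hs => by
    simpa [max_eq_left hs] using (hctx.genFun_mem_Icc (hx.mem_Icc hs)).2
  refine expTailAvg_lt (hx.integrableOn_forcing hctx u)
    (fun s hs => (hle s (hu.trans hs.le)).trans (hx.2.1 hu (hu.trans hs.le) hs.le)) ?_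
  filter_upwards [hx.2.2.2.1.eventually_lt_const (hx.rho_lt hctx hlam hu),
    eventually_ge_atTop 0] with s hs hs0
  exact (hle s hs0).trans_lt hs

theorem derivWithin_eq (hctx : CEContext P d ρ) (hx : IsCEFixedPoint P ρ lam x) {t : ℝ}
    (ht : 0 ≤ t) : derivWithin x (Ici 0) t = lam * (ceForcing P x t - x t) := by
  have hderiv : HasDerivWithinAt x (lam * (ceForcing P x t - x t)) (Ici 0) t := by
    rw [hx.eq_relaxation ht]
    exact (hasDerivAt_relaxation (hx.continuous_ceForcing hctx) t).hasDerivWithinAt.congr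
      (fun _ hu => hx.eq_relaxation hu) (hx.eq_relaxation ht)
  exact hderiv.derivWithin (uniqueDiffOn_Ici 0 t ht)

end IsCEFixedPoint

/-- for a CE fixed point, ρ < x(t) < 1 for all t > 0, and
−1 < x'(t) < 0 for all t ≥ 0. -/
theorem ce_fixed_point_strict_bounds {P : ℕ → ℝ} {d ρ : ℝ} (hctx : CEContext P d ρ)
    {lam : ℝ} (hlam0 : 0 < lam) (hlam1 : lam < 1)
    {x : ℝ → ℝ} (hx : IsCEFixedPoint P ρ lam x) :
    (∀ t, 0 < t → ρ < x t ∧ x t < 1) ∧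
    (∀ t, 0 ≤ t →
      -1 < derivWithin x (Set.Ici 0) t ∧ derivWithin x (Set.Ici 0) t < 0) := by
  have hHx {u : ℝ} (hu : 0 ≤ u) := hx.ceForcing_lt hctx hlam0 hu
  refine ⟨fun t ht => ⟨hx.rho_lt hctx hlam0 ht.le, ?_⟩, fun t ht => ?_⟩
  · calc x t = relaxation lam (ceForcing P x) t := hx.eq_relaxation ht.le
      _ < relaxation lam (fun _ => 1) t := relaxation_lt_relaxation hlam0 ht
          (hx.continuous_ceForcing hctx).continuousOn continuousOn_const
          fun u hu => (hHx hu.1).trans_le (hx.mem_Icc hu.1).2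
      _ = 1 := by simp [relaxation_const hlam0.ne']
  · have hHρ := hx.rho_le_ceForcing hctx t
    have hxt := hx.mem_Icc ht
    rw [hx.derivWithin_eq hctx ht]
    constructor <;> nlinarith [hHx ht, hctx.rho_nonneg, hxt.2]
end
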